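/- arXiv:2305.03301 — 4 statements merged into one kernel-verified Lean document; each statement's English description precedes it below -/
import Mathlib

section
/- Markov's inequality for tensors: Let A be a deterministic positive definite d×d complex matrix and let X be a random Hermitian d×d matrix with integrable entries such that X ⪰ 0 almost surely. Then ℙ(X ⋠ A) ≤ Tr(𝔼[X]·A⁻¹), where the right-hand side equals the (real, nonnegative) trace Tr(A^{−1/2}·𝔼[X]·A^{−1/2}). -/
open MeasureTheory
open scoped ComplexOrder

noncomputable section

/-- `d × d` complex matrices: the model for square tensors
`ℂ^{I_1×⋯×I_N×I_1×⋯×I_N}` under the Einstein product, with `d = ∏ I_j`. -/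
abbrev Mat (d : ℕ) := Matrix (Fin d) (Fin d) ℂ

/-- Continuous functional calculus: apply `f : ℝ → ℝ` to the eigenvalues of a
(Hermitian) matrix. -/
noncomputable def mfun {d : ℕ} (f : ℝ → ℝ) (A : Mat d) : Mat d := cfc f A

/-- Real matrix power `A^r` via the continuous functional calculus. -/
noncomputable def mpow {d : ℕ} (A : Mat d) (r : ℝ) : Mat d :=
  cfc (fun x : ℝ => x ^ r) A

/-- The positive semidefinite absolute value `|A| = (A²)^{1/2}` of a Hermitian
matrix, obtained by applying `|·|` to the eigenvalues. -/
noncomputable def matAbs {d : ℕ} (A : Mat d) : Mat d := mfun (fun x => |x|) A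

/-- Largest eigenvalue of a Hermitian matrix (junk value `0` otherwise). -/
noncomputable def eigMax {d : ℕ} (A : Mat d) : ℝ :=
  if h : A.IsHermitian then ⨆ i, h.eigenvalues i else 0

/-- Smallest eigenvalue of a Hermitian matrix (junk value `0` otherwise). -/
noncomputable def eigMin {d : ℕ} (A : Mat d) : ℝ :=
  if h : A.IsHermitian then ⨅ i, h.eigenvalues i else 0

/-- The `i`-th largest eigenvalue (`0`-indexed, so `eigDesc A 0 = λ₁(A)` is the
largest) of a Hermitian matrix; junk value `0` otherwise. -/
noncomputable def eigDesc {d : ℕ} (A : Mat d) (i : ℕ) : ℝ :=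
  if h : i < d ∧ A.IsHermitian then
    (h.2.eigenvalues ∘ Tuple.sort h.2.eigenvalues) (Fin.rev ⟨i, h.1⟩) else 0

/-- Operator perspective `X #_f Y = X^{1/2} · f(X^{-1/2} Y X^{-1/2}) · X^{1/2}`. -/
noncomputable def persp {d : ℕ} (f : ℝ → ℝ) (X Y : Mat d) : Mat d :=
  mpow X (1/2) * mfun f (mpow X (-(1/2)) * Y * mpow X (-(1/2))) * mpow X (1/2)

/-- `TMI¹` : positive continuous functions on `(0,∞)` with `f 1 = 1` that are
tensor (matrix, in dimension `d`) monotone increasing. -/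
def TMI1 (d : ℕ) (f : ℝ → ℝ) : Prop :=
  ContinuousOn f (Set.Ioi 0) ∧ (∀ x > 0, 0 < f x) ∧ f 1 = 1 ∧
    ∀ A B : Mat d, A.PosDef → B.PosDef → (A - B).PosSemidef →
      (mfun f A - mfun f B).PosSemidef

/-- `TMD¹` : positive continuous functions on `(0,∞)` with `h 1 = 1` that are
tensor (matrix, in dimension `d`) monotone decreasing. -/
def TMD1 (d : ℕ) (h : ℝ → ℝ) : Prop :=
  ContinuousOn h (Set.Ioi 0) ∧ (∀ x > 0, 0 < h x) ∧ h 1 = 1 ∧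
    ∀ A B : Mat d, A.PosDef → B.PosDef → (A - B).PosSemidef →
      (mfun h B - mfun h A).PosSemidef

/-- `TC¹` : positive continuous functions on `(0,∞)` with `g 1 = 1` that are
tensor (matrix, in dimension `d`) convex. -/
def TC1 (d : ℕ) (g : ℝ → ℝ) : Prop :=
  ContinuousOn g (Set.Ioi 0) ∧ (∀ x > 0, 0 < g x) ∧ g 1 = 1 ∧
    ∀ A B : Mat d, A.PosDef → B.PosDef → ∀ t : ℝ, 0 ≤ t → t ≤ 1 →
      ((t • mfun g A + (1 - t) • mfun g B) - mfun g (t • A + (1 - t) • B)).PosSemidef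

/-- `Z_j := X^{-2^{j-1}} · Y^{2^j} · X^{-2^{j-1}}` (so `Z_0 = X^{-1/2} Y X^{-1/2}`);
this is `Z_{k-1}` of the paper for `k = j+1`. -/
noncomputable def Zmat {d : ℕ} (X Y : Mat d) (j : ℕ) : Mat d :=
  mpow X (-((2 : ℝ) ^ ((j : ℝ) - 1))) * mpow Y ((2 : ℝ) ^ (j : ℝ)) *
    mpow X (-((2 : ℝ) ^ ((j : ℝ) - 1)))

/-- `Ψ_lower(q,f,X,Y)` for `q = 2ⁿ·q₀`. -/
noncomputable def PsiLower {d : ℕ} (q0 : ℝ) (n : ℕ) (f : ℝ → ℝ) (X Y : Mat d) : ℝ :=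
  eigMin (mpow (mfun f (Zmat X Y n)) (-q0) * mfun f (mpow (Zmat X Y n) q0)) *
    ∏ k ∈ Finset.range n,
      eigMin (mpow (mfun f (Zmat X Y k)) (-2) * mfun f (mpow (Zmat X Y k) 2))

/-- `Ψ_upper(q,f,X,Y)` for `q = 2ⁿ·q₀`. -/
noncomputable def PsiUpper {d : ℕ} (q0 : ℝ) (n : ℕ) (f : ℝ → ℝ) (X Y : Mat d) : ℝ :=
  eigMax (mpow (mfun f (Zmat X Y n)) (-q0) * mfun f (mpow (Zmat X Y n) q0)) *
    ∏ k ∈ Finset.range n,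
      eigMax (mpow (mfun f (Zmat X Y k)) (-2) * mfun f (mpow (Zmat X Y k) 2))

/-- The Kantorovich constant `K(m, M, p)`. -/
noncomputable def Kconst (m M p : ℝ) : ℝ :=
  ((p - 1) * (M ^ p - m ^ p) / (p * (m * M ^ p - M * m ^ p))) ^ p *
    (m * M ^ p - M * m ^ p) / ((p - 1) * (M - m))

/-- The Kantorovich constant, interpreted as `1` when `p = 1` or `m = M`. -/
noncomputable def Kc (m M p : ℝ) : ℝ := if p = 1 ∨ m = M then 1 else Kconst m M p

/-- `ψ(q, f, Z) = max( f(λ_min(Z)^q)/f(λ_min(Z))^q , f(λ_max(Z)^q)/f(λ_max(Z))^q )`. -/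
noncomputable def psiRatio {d : ℕ} (q : ℝ) (f : ℝ → ℝ) (Z : Mat d) : ℝ :=
  max (f (eigMin Z ^ q) / f (eigMin Z) ^ q) (f (eigMax Z ^ q) / f (eigMax Z) ^ q)

/-- Entrywise expectation of a random matrix. -/
noncomputable def Emat {d : ℕ} {Ω : Type*} [MeasurableSpace Ω] (μ : Measure Ω)
    (X : Ω → Mat d) : Mat d := fun i j => ∫ ω, X ω i j ∂μ

section Aux

open Matrix

variable {d : ℕ}

lemma trace_eq_sum_eigenvalues' {Y : Mat d} (hY : Y.IsHermitian) :
    Y.trace = ((∑ i, hY.eigenvalues i : ℝ) : ℂ) := by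
  have hU : (star (hY.eigenvectorUnitary : Mat d)) * (hY.eigenvectorUnitary : Mat d) = 1 :=
    Unitary.star_mul_self_of_mem (SetLike.coe_mem _)
  conv_lhs => rw [hY.spectral_theorem, Unitary.conjStarAlgAut_apply]
  rw [Matrix.trace_mul_cycle, hU, one_mul, Matrix.trace_diagonal]
  push_cast
  rfl

lemma sandwich_mul {U : Mat d} (hU : star U * U = 1) (f g : Fin d → ℂ) :
    (U * Matrix.diagonal f * star U) * (U * Matrix.diagonal g * star U)
      = U * Matrix.diagonal (fun i => f i * g i) * star U := by
  calc (U * Matrix.diagonal f * star U) * (U * Matrix.diagonal g * star U)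
      = U * (Matrix.diagonal f * ((star U * U) * Matrix.diagonal g)) * star U := by
        simp only [mul_assoc]
    _ = U * Matrix.diagonal (fun i => f i * g i) * star U := by
        rw [hU, one_mul, Matrix.diagonal_mul_diagonal]

lemma sandwich_herm (U : Mat d) (f : Fin d → ℝ) :
    (U * Matrix.diagonal (fun i => ((f i : ℝ) : ℂ)) * star U).IsHermitian := by
  have hD : star (Matrix.diagonal (fun i => ((f i : ℝ) : ℂ)))
      = Matrix.diagonal (fun i => ((f i : ℝ) : ℂ)) := by
    rw [Matrix.star_eq_conjTranspose, Matrix.diagonal_conjTranspose]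
    simp [Pi.star_def, Complex.conj_ofReal]
  show _ᴴ = _
  rw [← Matrix.star_eq_conjTranspose]
  simp only [StarMul.star_mul, star_star, hD]
  rw [mul_assoc]

lemma one_sub_psd {Y : Mat d} (hY : Y.IsHermitian) (h : ∀ i, hY.eigenvalues i ≤ 1) :
    ((1 : Mat d) - Y).PosSemidef := by
  have hD : (Matrix.diagonal (fun i => ((1 - hY.eigenvalues i : ℝ) : ℂ))).PosSemidef :=
    Matrix.posSemidef_diagonal_iff.mpr fun i => Complex.zero_le_real.mpr (by linarith [h i])
  have hpsd := hD.mul_mul_conjTranspose_same (hY.eigenvectorUnitary : Mat d)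
  have hU : (hY.eigenvectorUnitary : Mat d) * star (hY.eigenvectorUnitary : Mat d) = 1 :=
    Unitary.mul_star_self_of_mem (SetLike.coe_mem _)
  have hkey : (1 : Mat d) - Y =
      (hY.eigenvectorUnitary : Mat d)
        * Matrix.diagonal (fun i => ((1 - hY.eigenvalues i : ℝ) : ℂ))
        * (hY.eigenvectorUnitary : Mat d)ᴴ := by
    have hdiag : Matrix.diagonal (fun i => ((1 - hY.eigenvalues i : ℝ) : ℂ))
        = 1 - Matrix.diagonal (fun i => ((hY.eigenvalues i : ℝ) : ℂ)) := by
      rw [← Matrix.diagonal_one, Matrix.diagonal_sub]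
      congr! with i
      push_cast
      ring
    rw [← Matrix.star_eq_conjTranspose, hdiag, mul_sub, sub_mul, mul_one, hU]
    exact congrArg (1 - ·) hY.spectral_theorem
  rw [hkey]
  exact hpsd

lemma one_le_retrace {Y : Mat d} (hY : Y.PosSemidef) (h : ¬ ((1 : Mat d) - Y).PosSemidef) :
    1 ≤ (Matrix.trace Y).re := by
  by_contra hlt
  push_neg at hlt
  refine h (one_sub_psd hY.1 fun i => ?_)
  have hs : ∑ j, hY.1.eigenvalues j < 1 := by
    have := trace_eq_sum_eigenvalues' hY.1
    rw [this] at hlt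
    simpa using hlt
  calc hY.1.eigenvalues i ≤ ∑ j, hY.1.eigenvalues j :=
        Finset.single_le_sum (fun j _ => hY.eigenvalues_nonneg j) (Finset.mem_univ i)
    _ ≤ 1 := hs.le

lemma mpow_eq {A : Mat d} (hA : A.IsHermitian) (r : ℝ) :
    mpow A r = (hA.eigenvectorUnitary : Mat d)
      * Matrix.diagonal (fun i => ((hA.eigenvalues i ^ r : ℝ) : ℂ))
      * star (hA.eigenvectorUnitary : Mat d) := by
  rw [mpow, hA.cfc_eq, Matrix.IsHermitian.cfc]
  rfl

end Aux

set_option maxHeartbeats 1000000 in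
/-- **Markov's inequality for tensors** (Theorem 3.1). For a deterministic PD
matrix `A` and a random Hermitian matrix `X ⪰ 0` a.s. with integrable entries,
`ℙ(X ⋠ A) ≤ Tr(𝔼[X]·A⁻¹)`, and the right-hand side equals the real,
nonnegative trace `Tr(A^{-1/2}·𝔼[X]·A^{-1/2})`. -/
theorem markov_inequality_for_tensors {d : ℕ} (hd : 1 ≤ d)
    {Ω : Type*} [MeasurableSpace Ω] (μ : Measure Ω) [IsProbabilityMeasure μ]
    (A : Mat d) (hA : A.PosDef) (X : Ω → Mat d)
    (hint : ∀ i j, Integrable (fun ω => X ω i j) μ)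
    (hpsd : ∀ᵐ ω ∂μ, (X ω).PosSemidef) :
    (μ {ω | ¬ (A - X ω).PosSemidef}).toReal ≤ (Matrix.trace (Emat μ X * A⁻¹)).re ∧
      Matrix.trace (Emat μ X * A⁻¹) =
        Matrix.trace (mpow A (-(1/2)) * Emat μ X * mpow A (-(1/2))) ∧
      (Matrix.trace (Emat μ X * A⁻¹)).im = 0 ∧
      0 ≤ (Matrix.trace (Emat μ X * A⁻¹)).re := by
  classical
  have hH : A.IsHermitian := hA.1
  set U : Mat d := (hH.eigenvectorUnitary : Mat d) with hUdef
  set lam : Fin d → ℝ := hH.eigenvalues with hlamdef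
  have hUl : star U * U = 1 := Unitary.star_mul_self_of_mem (SetLike.coe_mem _)
  have hUr : U * star U = 1 := Unitary.mul_star_self_of_mem (SetLike.coe_mem _)
  have hlam : ∀ i, 0 < lam i := fun i => hA.eigenvalues_pos i
  set B : Mat d := mpow A (-(1/2)) with hBdef0
  set C : Mat d := mpow A (1/2) with hCdef0
  have hBdef : B = U * Matrix.diagonal (fun i => ((lam i ^ (-(1/2) : ℝ) : ℝ) : ℂ)) * star U :=
    mpow_eq hH _
  have hCdef : C = U * Matrix.diagonal (fun i => ((lam i ^ ((1:ℝ)/2) : ℝ) : ℂ)) * star U :=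
    mpow_eq hH _
  have hAdef : A = U * Matrix.diagonal (fun i => ((lam i : ℝ) : ℂ)) * star U :=
    hH.spectral_theorem
  have hBH : B.IsHermitian := by rw [hBdef]; exact sandwich_herm U _
  have hCH : C.IsHermitian := by rw [hCdef]; exact sandwich_herm U _
  -- algebraic identities
  have hCB : C * B = 1 := by
    rw [hCdef, hBdef, sandwich_mul hUl]
    have hfun : (fun i => ((lam i ^ ((1:ℝ)/2) : ℝ) : ℂ) * ((lam i ^ (-(1/2) : ℝ) : ℝ) : ℂ))
        = fun _ => (1 : ℂ) := by
      funext i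
      rw [← Complex.ofReal_mul, ← Real.rpow_add (hlam i)]
      norm_num
    rw [hfun, Matrix.diagonal_one, mul_one, hUr]
  have hBC : B * C = 1 := by
    rw [hCdef, hBdef, sandwich_mul hUl]
    have hfun : (fun i => ((lam i ^ (-(1/2) : ℝ) : ℝ) : ℂ) * ((lam i ^ ((1:ℝ)/2) : ℝ) : ℂ))
        = fun _ => (1 : ℂ) := by
      funext i
      rw [← Complex.ofReal_mul, ← Real.rpow_add (hlam i)]
      norm_num
    rw [hfun, Matrix.diagonal_one, mul_one, hUr]
  have hCC : C * C = A := by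
    rw [hCdef, sandwich_mul hUl, hAdef]
    have hfun : (fun i => ((lam i ^ ((1:ℝ)/2) : ℝ) : ℂ) * ((lam i ^ ((1:ℝ)/2) : ℝ) : ℂ))
        = fun i => ((lam i : ℝ) : ℂ) := by
      funext i
      rw [← Complex.ofReal_mul, ← Real.rpow_add (hlam i)]
      norm_num
    rw [hfun]
  have hBBA : (B * B) * A = 1 := by
    rw [hBdef, sandwich_mul hUl, hAdef, sandwich_mul hUl]
    have hfun : (fun i => ((lam i ^ (-(1/2) : ℝ) : ℝ) : ℂ) * ((lam i ^ (-(1/2) : ℝ) : ℝ) : ℂ)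
        * ((lam i : ℝ) : ℂ)) = fun _ => (1 : ℂ) := by
      funext i
      rw [← Complex.ofReal_mul, ← Complex.ofReal_mul, ← Real.rpow_add (hlam i)]
      rw [show (-(1/2) : ℝ) + -(1/2) = -1 by norm_num, Real.rpow_neg_one,
        inv_mul_cancel₀ (hlam i).ne']
      norm_num
    rw [hfun, Matrix.diagonal_one, mul_one, hUr]
  have hAinv : A⁻¹ = B * B := Matrix.inv_eq_left_inv hBBA
  have htrB : ∀ M : Mat d, Matrix.trace (M * A⁻¹) = Matrix.trace (B * M * B) := by
    intro M
    rw [hAinv, ← mul_assoc, Matrix.trace_mul_comm, ← mul_assoc]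
  -- pointwise facts
  have hYpsd : ∀ {M : Mat d}, M.PosSemidef → (B * M * B).PosSemidef := by
    intro M hM
    have := hM.mul_mul_conjTranspose_same B
    rwa [hBH] at this
  have hpoint : ∀ M : Mat d, M.PosSemidef → ¬ (A - M).PosSemidef →
      1 ≤ (Matrix.trace (M * A⁻¹)).re := by
    intro M hM hnot
    have hY := hYpsd hM
    have hnot1 : ¬ ((1 : Mat d) - B * M * B).PosSemidef := by
      intro hcon
      apply hnot
      have hconj := hcon.mul_mul_conjTranspose_same C
      rw [hCH] at hconj
      have heq : C * ((1 : Mat d) - B * M * B) * C = A - M := by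
        rw [mul_sub, sub_mul, mul_one, hCC]
        congr 1
        simp only [← mul_assoc]
        rw [hCB, one_mul, mul_assoc, hBC, mul_one]
      rwa [heq] at hconj
    have := one_le_retrace hY hnot1
    rwa [htrB M]
  -- the scalar random variable
  set F : Ω → ℂ := fun ω => Matrix.trace (X ω * A⁻¹) with hFdef
  have hFint : Integrable F μ := by
    simp only [hFdef, Matrix.trace, Matrix.diag, Matrix.mul_apply]
    apply integrable_finset_sum
    intro i _
    apply integrable_finset_sum
    intro j _
    exact (hint i j).mul_const _
  have hEF : ∫ ω, F ω ∂μ = Matrix.trace (Emat μ X * A⁻¹) := by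
    simp only [hFdef, Matrix.trace, Matrix.diag, Matrix.mul_apply, Emat]
    rw [integral_finset_sum _ (fun i _ =>
      integrable_finset_sum _ fun j _ => (hint i j).mul_const _)]
    refine Finset.sum_congr rfl fun i _ => ?_
    rw [integral_finset_sum _ (fun j _ => (hint i j).mul_const _)]
    exact Finset.sum_congr rfl fun j _ => integral_mul_const _ _
  have htrace_psd : ∀ M : Mat d, M.PosSemidef →
      0 ≤ (Matrix.trace M).re ∧ (Matrix.trace M).im = 0 := by
    intro M hM
    rw [trace_eq_sum_eigenvalues' hM.1]
    refine ⟨?_, by simp⟩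
    simp only [Complex.ofReal_re]
    exact Finset.sum_nonneg fun i _ => hM.eigenvalues_nonneg i
  have hae : ∀ᵐ ω ∂μ, 0 ≤ (F ω).re ∧ (F ω).im = 0 := by
    filter_upwards [hpsd] with ω hps
    have := htrace_psd _ (hYpsd hps)
    rw [← htrB (X ω)] at this
    exact this
  have hre_int : Integrable (fun ω => (F ω).re) μ := hFint.re
  have hre_nonneg : 0 ≤ᵐ[μ] fun ω => (F ω).re := by
    filter_upwards [hae] with ω h using h.1
  -- Markov
  have hmark := mul_meas_ge_le_integral_of_nonneg hre_nonneg hre_int 1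
  have hST : μ {ω | ¬ (A - X ω).PosSemidef} ≤ μ {ω | 1 ≤ (F ω).re} := by
    apply measure_mono_ae
    filter_upwards [hpsd] with ω hps
    exact fun hS => hpoint (X ω) hps hS
  have hreint : ∫ ω, (F ω).re ∂μ = (Matrix.trace (Emat μ X * A⁻¹)).re := by
    rw [← hEF]
    have := integral_re (𝕜 := ℂ) hFint
    simpa using this
  refine ⟨?_, ?_, ?_, ?_⟩
  · calc (μ {ω | ¬ (A - X ω).PosSemidef}).toReal
        ≤ (μ {ω | 1 ≤ (F ω).re}).toReal :=
          ENNReal.toReal_mono (measure_ne_top μ _) hST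
      _ = 1 * (μ {ω | 1 ≤ (F ω).re}).toReal := by ring
      _ ≤ ∫ ω, (F ω).re ∂μ := hmark
      _ = (Matrix.trace (Emat μ X * A⁻¹)).re := hreint
  · rw [htrB (Emat μ X)]
  · rw [← hEF]
    have him : ∫ ω, (F ω).im ∂μ = 0 := by
      rw [integral_eq_zero_of_ae]
      filter_upwards [hae] with ω h using h.2
    have := integral_im (𝕜 := ℂ) hFint
    simp only [RCLike.im_to_complex] at this
    rw [← this, him]
  · rw [← hreint]
    exact integral_nonneg_of_ae hre_nonneg
end
end

section
/- Let A be a positive definite d×d complex matrix and X a positive semidefinite Hermitian d×d matrix. If X ⋠ A (i.e. A − X is not positive semidefinite), then Tr(A^{−1/2}·X·A^{−1/2}) ≥ 1. Equivalently, the indicator 𝟙[X ⋠ A] ≤ Tr(A^{−1/2}·X·A^{−1/2}). -/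
open MeasureTheory
open scoped ComplexOrder

noncomputable section

lemma spectrum_pos_of_posDef {d : ℕ} {A : Mat d} (hA : A.PosDef) :
    ∀ x ∈ spectrum ℝ A, 0 < x := by
  intro x hx
  rw [hA.1.spectrum_real_eq_range_eigenvalues] at hx
  obtain ⟨i, rfl⟩ := hx
  exact hA.eigenvalues_pos i

lemma cfc_posSemidef {d : ℕ} {M : Mat d} (hM : M.IsHermitian) {f : ℝ → ℝ}
    (hf : ∀ x ∈ spectrum ℝ M, 0 ≤ f x) : (cfc f M).PosSemidef := by
  rw [Matrix.IsHermitian.cfc_eq hM]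
  unfold Matrix.IsHermitian.cfc
  have hD : (Matrix.diagonal (RCLike.ofReal ∘ f ∘ hM.eigenvalues) : Mat d).PosSemidef := by
    rw [Matrix.posSemidef_diagonal_iff]
    intro i
    have := hf _ (hM.spectrum_real_eq_range_eigenvalues ▸ Set.mem_range_self i)
    simpa [Function.comp] using this
  simpa [Matrix.star_eq_conjTranspose] using hD.mul_mul_conjTranspose_same _

lemma mpow_mul_mpow {d : ℕ} {A : Mat d} (hA : A.PosDef) (r s : ℝ) :
    mpow A r * mpow A s = mpow A (r + s) := by
  have hsa : IsSelfAdjoint A := hA.1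
  have hc : ∀ t : ℝ, ContinuousOn (fun x : ℝ => x ^ t) (spectrum ℝ A) := fun t x hx =>
    (Real.continuousAt_rpow_const x t
      (Or.inl (spectrum_pos_of_posDef hA x hx).ne')).continuousWithinAt
  rw [mpow, mpow, mpow, ← cfc_mul _ _ A (hc r) (hc s)]
  exact cfc_congr fun x hx => (Real.rpow_add (spectrum_pos_of_posDef hA x hx) r s).symm

lemma mpow_zero' {d : ℕ} {A : Mat d} (hA : A.PosDef) : mpow A 0 = 1 := by
  have hsa : IsSelfAdjoint A := hA.1
  rw [mpow, cfc_congr (g := fun _ : ℝ => 1) fun x _ => Real.rpow_zero x]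
  exact cfc_const_one ℝ A

lemma mpow_one' {d : ℕ} {A : Mat d} (hA : A.PosDef) : mpow A 1 = A := by
  have hsa : IsSelfAdjoint A := hA.1
  rw [mpow, cfc_congr (g := fun x : ℝ => x) fun x _ => Real.rpow_one x]
  exact cfc_id' ℝ A


set_option maxHeartbeats 1000000 in
/-- Key step in tensor Markov's inequality: if `A` is PD, `X` is PSD, and
`X ⋠ A` (i.e. `A − X` is not PSD), then `Tr(A^{-1/2}·X·A^{-1/2}) ≥ 1`
(equivalently, `𝟙[X ⋠ A] ≤ Tr(A^{-1/2}·X·A^{-1/2})`). -/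
theorem indicator_le_trace_conj {d : ℕ} (hd : 1 ≤ d) (A X : Mat d)
    (hA : A.PosDef) (hX : X.PosSemidef) (h : ¬ (A - X).PosSemidef) :
    1 ≤ (Matrix.trace (mpow A (-(1/2)) * X * mpow A (-(1/2)))).re := by
  have hsp := spectrum_pos_of_posDef hA
  set B := mpow A (-(1/2)) with hBdef
  set C := mpow A (1/2) with hCdef
  have hBpsd : B.PosSemidef := cfc_posSemidef hA.1 fun x hx => Real.rpow_nonneg (hsp x hx).le _
  have hCpsd : C.PosSemidef := cfc_posSemidef hA.1 fun x hx => Real.rpow_nonneg (hsp x hx).le _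
  have hCB : C * B = 1 := by
    rw [hCdef, hBdef, mpow_mul_mpow hA]; norm_num [mpow_zero' hA]
  have hBC : B * C = 1 := by
    rw [hCdef, hBdef, mpow_mul_mpow hA]; norm_num [mpow_zero' hA]
  have hCC : C * C = A := by
    rw [hCdef, mpow_mul_mpow hA]; norm_num [mpow_one' hA]
  set Y := B * X * B with hYdef
  have hY : Y.PosSemidef := by
    have := hX.mul_mul_conjTranspose_same B
    rwa [hBpsd.1.eq] at this
  have h1Y : ¬ ((1 : Mat d) - Y).PosSemidef := by
    intro hc
    apply h
    have h2 := hc.mul_mul_conjTranspose_same C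
    rw [hCpsd.1.eq] at h2
    have key : C * ((1 : Mat d) - Y) * C = A - X := by
      rw [mul_sub, sub_mul, mul_one, hCC, hYdef]
      congr 1
      calc C * (B * X * B) * C = (C * B) * X * (B * C) := by
            simp only [mul_assoc]
        _ = X := by rw [hCB, hBC, one_mul, mul_one]
    rwa [key] at h2
  have hex : ∃ i, 1 < hY.1.eigenvalues i := by
    by_contra hcon
    push_neg at hcon
    apply h1Y
    have hYsa : IsSelfAdjoint Y := hY.1
    have e1 : (1 : Mat d) - Y = cfc (fun x : ℝ => 1 - x) Y := by
      rw [cfc_sub (fun _ : ℝ => 1) (fun x : ℝ => x) Y (by fun_prop) (by fun_prop),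
        cfc_const_one ℝ Y, cfc_id' ℝ Y]
    rw [e1]
    apply cfc_posSemidef hY.1
    intro x hx
    rw [hY.1.spectrum_real_eq_range_eigenvalues] at hx
    obtain ⟨i, rfl⟩ := hx
    simpa using hcon i
  obtain ⟨i, hi⟩ := hex
  have htr : (Matrix.trace Y).re = ∑ j, hY.1.eigenvalues j := by
    rw [hY.1.trace_eq_sum_eigenvalues]
    simp
  rw [htr]
  refine le_of_lt (lt_of_lt_of_le hi ?_)
  exact Finset.single_le_sum (fun j _ => hY.eigenvalues_nonneg j) (Finset.mem_univ i)
end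
end

section
/- Let X, Y, Z be random positive definite d×d complex matrices with X ⪯ Y ⪯ Z almost surely, let C be a deterministic positive definite d×d matrix, and let q ≥ 1, with Y^q and Z^q having integrable entries. Then ℙ(Y ⋠ C) ≤ Tr(𝔼[Z^q]·C^{−q}) and ℙ(X ⋠ C) ≤ Tr(𝔼[Y^q]·C^{−q}). -/
open MeasureTheory
open scoped ComplexOrder

noncomputable section

/-!
If `Y ≤ Z` and `Y ⋠ C`, then `Z ⋠ C`. By operator monotonicity of `t ↦ t ^ q⁻¹` (Löwner–Heinz),
`Z ⋠ C` forces `Z ^ q ⋠ C ^ q`, i.e. the positive matrix `C ^ (-q/2) * Z ^ q * C ^ (-q/2)` is not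
below `1`; so one of its eigenvalues exceeds `1`, and hence so does its trace
`Tr (Z ^ q * C ^ (-q))`. Markov's inequality for this nonnegative random variable concludes.
-/

open Matrix

section

open scoped Matrix.Norms.L2Operator MatrixOrder

namespace CFC

variable {A : Type*} [CStarAlgebra A] [PartialOrder A] [StarOrderedRing A]

lemma le_of_rpow_le_rpow {a b : A} {q : ℝ} (hq : 1 ≤ q) (ha : 0 ≤ a) (hb : 0 ≤ b)
    (hab : a ^ q ≤ b ^ q) : a ≤ b := by
  have hq0 : 0 < q := zero_lt_one.trans_le hq
  have hq0' : 0 ≤ q⁻¹ := by positivity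
  have h := rpow_le_rpow ⟨hq0', inv_le_one_of_one_le₀ hq⟩ hab
  rwa [rpow_rpow_of_exponent_nonneg a q q⁻¹ hq0.le hq0',
    rpow_rpow_of_exponent_nonneg b q q⁻¹ hq0.le hq0', mul_inv_cancel₀ hq0.ne',
    rpow_one a, rpow_one b] at h

lemma conjugate_rpow_nonneg {c w : A} (hw : 0 ≤ w) (x : ℝ) : 0 ≤ c ^ x * w * c ^ x :=
  rpow_nonneg.isSelfAdjoint.conjugate_nonneg hw

lemma le_rpow_of_conjugate_rpow_neg_half_le_one {a c : A} {q : ℝ} (hc : IsStrictlyPositive c)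
    (h : c ^ (-(q / 2)) * a * c ^ (-(q / 2)) ≤ 1) : a ≤ c ^ q := by
  have h' := (rpow_nonneg (a := c) (y := q / 2)).isSelfAdjoint.conjugate_le_conjugate h
  have hcancel : c ^ (q / 2) * (c ^ (-(q / 2)) * a * c ^ (-(q / 2))) * c ^ (q / 2) = a := by
    rw [← mul_assoc, ← mul_assoc, rpow_mul_rpow_neg _ hc, one_mul, mul_assoc,
      rpow_neg_mul_rpow _ hc, mul_one]
  rwa [hcancel, mul_one, ← rpow_add hc.isUnit, add_halves] at h'

end CFC

namespace Matrix

variable {n : Type*} [Fintype n] [DecidableEq n]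

lemma PosSemidef.le_one_of_re_trace_le_one {𝕜 : Type*} [RCLike 𝕜] {T : Matrix n n 𝕜}
    (hT : T.PosSemidef) (h : RCLike.re T.trace ≤ 1) : T ≤ 1 := by
  rw [← map_one (algebraMap ℝ (Matrix n n 𝕜))]
  refine le_algebraMap_of_spectrum_le (fun x hx => ?_) hT.1.isSelfAdjoint
  obtain ⟨i, rfl⟩ := hT.1.spectrum_real_eq_range_eigenvalues ▸ hx
  refine le_trans ?_ h
  rw [hT.1.trace_eq_sum_eigenvalues, map_sum]
  simpa using Finset.single_le_sum (fun j _ => hT.eigenvalues_nonneg j) (Finset.mem_univ i)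

lemma trace_mul_rpow_neg {C : Matrix n n ℂ} (hC : C.PosDef) (W : Matrix n n ℂ) (q : ℝ) :
    trace (W * C ^ (-q)) = trace (C ^ (-(q / 2)) * W * C ^ (-(q / 2))) := by
  rw [trace_mul_cycle, ← CFC.rpow_add hC.isStrictlyPositive.isUnit, ← neg_add, add_halves,
    trace_mul_comm]

lemma re_trace_mul_rpow_neg_nonneg {C W : Matrix n n ℂ} (hC : C.PosDef) (hW : 0 ≤ W) (q : ℝ) :
    0 ≤ (trace (W * C ^ (-q))).re := by
  rw [trace_mul_rpow_neg hC]
  exact (Complex.nonneg_iff.1 (CFC.conjugate_rpow_nonneg hW _).posSemidef.trace_nonneg).1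

lemma le_of_re_trace_rpow_mul_rpow_neg_le_one {C W : Matrix n n ℂ} (hC : C.PosDef) (hW : 0 ≤ W)
    {q : ℝ} (hq : 1 ≤ q) (h : (trace (W ^ q * C ^ (-q))).re ≤ 1) : W ≤ C := by
  rw [trace_mul_rpow_neg hC] at h
  have hT : C ^ (-(q / 2)) * W ^ q * C ^ (-(q / 2)) ≤ 1 :=
    (CFC.conjugate_rpow_nonneg (w := W ^ q) CFC.rpow_nonneg _).posSemidef
      |>.le_one_of_re_trace_le_one h
  have hWC : W ^ q ≤ C ^ q :=
    CFC.le_rpow_of_conjugate_rpow_neg_half_le_one hC.isStrictlyPositive hT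
  exact CFC.le_of_rpow_le_rpow hq hW hC.posSemidef.nonneg hWC

end Matrix

lemma mpow_eq_rpow {d : ℕ} {A : Mat d} (hA : 0 ≤ A) (r : ℝ) : mpow A r = A ^ r := by
  rw [CFC.rpow_eq_cfc_real hA]
  rfl

namespace MeasureTheory

variable {Ω : Type*} [MeasurableSpace Ω] {μ : Measure Ω}

lemma measureReal_le_integral_of_ae_one_le {s : Set Ω} {g : Ω → ℝ} (hg : Integrable g μ)
    (hg0 : 0 ≤ᵐ[μ] g) (hs : ∀ᵐ ω ∂μ, ω ∈ s → 1 ≤ g ω) : μ.real s ≤ ∫ ω, g ω ∂μ :=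
  calc μ.real s ≤ μ.real {ω | 1 ≤ g ω} :=
        ENNReal.toReal_mono (hg.measure_ge_lt_top one_pos).ne (measure_mono_ae hs)
    _ ≤ ∫ ω, g ω ∂μ := by simpa using mul_meas_ge_le_integral_of_nonneg hg0 hg 1

variable {d : ℕ} {M : Ω → Mat d}

lemma integrable_trace_mul (hM : ∀ i j, Integrable (fun ω => M ω i j) μ) (K : Mat d) :
    Integrable (fun ω => trace (M ω * K)) μ := by
  simp only [Matrix.trace, Matrix.diag, Matrix.mul_apply]
  exact integrable_finsetSum _ fun i _ => integrable_finsetSum _ fun j _ => (hM i j).mul_const _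

lemma trace_Emat_mul (hM : ∀ i j, Integrable (fun ω => M ω i j) μ) (K : Mat d) :
    trace (Emat μ M * K) = ∫ ω, trace (M ω * K) ∂μ := by
  simp only [Matrix.trace, Matrix.diag, Matrix.mul_apply, Emat]
  rw [integral_finsetSum _ fun i _ => integrable_finsetSum _ fun j _ => (hM i j).mul_const _]
  refine Finset.sum_congr rfl fun i _ => ?_
  rw [integral_finsetSum _ fun j _ => (hM i j).mul_const _]
  simp_rw [integral_mul_const]

end MeasureTheory

lemma measureReal_not_le_le_re_trace_Emat_mpow_mul_mpow_neg {d : ℕ} {Ω : Type*}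
    [MeasurableSpace Ω] {μ : Measure Ω} {V W : Ω → Mat d}
    (hW : ∀ᵐ ω ∂μ, 0 ≤ W ω) (hVW : ∀ᵐ ω ∂μ, V ω ≤ W ω) {C : Mat d} (hC : C.PosDef) {q : ℝ}
    (hq : 1 ≤ q) (hint : ∀ i j, Integrable (fun ω => mpow (W ω) q i j) μ) :
    μ.real {ω | ¬ V ω ≤ C} ≤ (trace (Emat μ (fun ω => mpow (W ω) q) * mpow C (-q))).re := by
  have hg := integrable_trace_mul hint (mpow C (-q))
  rw [trace_Emat_mul hint, ← RCLike.re_to_complex, ← integral_re hg]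
  refine measureReal_le_integral_of_ae_one_le hg.re ?_ ?_
  · filter_upwards [hW] with ω hω
    rw [mpow_eq_rpow hω, mpow_eq_rpow hC.posSemidef.nonneg]
    exact re_trace_mul_rpow_neg_nonneg hC CFC.rpow_nonneg q
  · filter_upwards [hW, hVW] with ω hω hVWω hVC
    rw [mpow_eq_rpow hω, mpow_eq_rpow hC.posSemidef.nonneg]
    by_contra! hlt
    exact hVC (hVWω.trans (le_of_re_trace_rpow_mul_rpow_neg_le_one hC hω hq hlt.le))

end

theorem tail_bounds_of_loewner_sandwich_general {d : ℕ}
    {Ω : Type*} [MeasurableSpace Ω] (μ : Measure Ω)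
    (X Y Z : Ω → Mat d)
    (hY : ∀ᵐ ω ∂μ, (Y ω).PosDef)
    (hZ : ∀ᵐ ω ∂μ, (Z ω).PosDef)
    (hXY : ∀ᵐ ω ∂μ, (Y ω - X ω).PosSemidef)
    (hYZ : ∀ᵐ ω ∂μ, (Z ω - Y ω).PosSemidef)
    (C : Mat d) (hC : C.PosDef) (q : ℝ) (hq : 1 ≤ q)
    (hintY : ∀ i j, Integrable (fun ω => mpow (Y ω) q i j) μ)
    (hintZ : ∀ i j, Integrable (fun ω => mpow (Z ω) q i j) μ) :
    (μ {ω | ¬ (C - Y ω).PosSemidef}).toReal ≤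
        (Matrix.trace (Emat μ (fun ω => mpow (Z ω) q) * mpow C (-q))).re ∧
      (μ {ω | ¬ (C - X ω).PosSemidef}).toReal ≤
        (Matrix.trace (Emat μ (fun ω => mpow (Y ω) q) * mpow C (-q))).re :=
  ⟨measureReal_not_le_le_re_trace_Emat_mpow_mul_mpow_neg
      (hZ.mono fun _ h => h.posSemidef.nonneg) hYZ hC hq hintZ,
    measureReal_not_le_le_re_trace_Emat_mpow_mul_mpow_neg
      (hY.mono fun _ h => h.posSemidef.nonneg) hXY hC hq hintY⟩

/-- Lemma 3.6: if `X ⪯ Y ⪯ Z` a.s. are random PD matrices, `C` is deterministic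
PD and `q ≥ 1`, then `ℙ(Y ⋠ C) ≤ Tr(𝔼[Z^q]·C^{-q})` and
`ℙ(X ⋠ C) ≤ Tr(𝔼[Y^q]·C^{-q})`. -/
theorem tail_bounds_of_loewner_sandwich {d : ℕ} (hd : 1 ≤ d)
    {Ω : Type*} [MeasurableSpace Ω] (μ : Measure Ω) [IsProbabilityMeasure μ]
    (X Y Z : Ω → Mat d)
    (hX : ∀ᵐ ω ∂μ, (X ω).PosDef) (hY : ∀ᵐ ω ∂μ, (Y ω).PosDef)
    (hZ : ∀ᵐ ω ∂μ, (Z ω).PosDef)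
    (hXY : ∀ᵐ ω ∂μ, (Y ω - X ω).PosSemidef)
    (hYZ : ∀ᵐ ω ∂μ, (Z ω - Y ω).PosSemidef)
    (C : Mat d) (hC : C.PosDef) (q : ℝ) (hq : 1 ≤ q)
    (hintY : ∀ i j, Integrable (fun ω => mpow (Y ω) q i j) μ)
    (hintZ : ∀ i j, Integrable (fun ω => mpow (Z ω) q i j) μ) :
    (μ {ω | ¬ (C - Y ω).PosSemidef}).toReal ≤
        (Matrix.trace (Emat μ (fun ω => mpow (Z ω) q) * mpow C (-q))).re ∧
      (μ {ω | ¬ (C - X ω).PosSemidef}).toReal ≤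
        (Matrix.trace (Emat μ (fun ω => mpow (Y ω) q) * mpow C (-q))).re :=
  tail_bounds_of_loewner_sandwich_general μ X Y Z hY hZ hXY hYZ C hC q hq hintY hintZ
end
end

section
/- Kantorovich-type inequality: Let A, B be positive definite d×d complex matrices with m₁·I ⪯ A ⪯ M₁·I and m₂·I ⪯ B ⪯ M₂·I, where 0 < m₁ < M₁ and 0 < m₂ < M₂. If B ⪯ A and p > 1, then B^p ⪯ K(m₁,M₁,p)·A^p and B^p ⪯ K(m₂,M₂,p)·A^p. -/
open MeasureTheory
open scoped ComplexOrder

noncomputable section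

namespace KantAux

open Matrix


/-- slope of the chord of `t ^ p` over `[m, M]`. -/
def mu (m M p : ℝ) : ℝ := (M ^ p - m ^ p) / (M - m)
/-- intercept of the chord of `t ^ p` over `[m, M]`. -/
def nu (m M p : ℝ) : ℝ := (M * m ^ p - m * M ^ p) / (M - m)

variable {m M p : ℝ}

lemma numer_pos (hm : 0 < m) (hM : m < M) (hp : 1 < p) :
    0 < m * M ^ p - M * m ^ p := by
  have hM0 : 0 < M := hm.trans hM
  have h1 : M ^ p = M * M ^ (p - 1) := by
    rw [← Real.rpow_one_add' hM0.le (by intro h; linarith)]; ring_nf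
  have h2 : m ^ p = m * m ^ (p - 1) := by
    rw [← Real.rpow_one_add' hm.le (by intro h; linarith)]; ring_nf
  have h3 : m ^ (p - 1) < M ^ (p - 1) := Real.rpow_lt_rpow hm.le hM (by linarith)
  calc 0 < m * M * (M ^ (p-1) - m ^ (p-1)) :=
        mul_pos (mul_pos hm hM0) (by linarith)
    _ = m * M ^ p - M * m ^ p := by rw [h1, h2]; ring

lemma mu_pos (hm : 0 < m) (hM : m < M) (hp : 1 < p) : 0 < mu m M p := by
  have h3 : m ^ p < M ^ p := Real.rpow_lt_rpow hm.le hM (by linarith)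
  have : 0 < M - m := by linarith
  exact div_pos (by linarith) this

lemma neg_nu : -(nu m M p) = (m * M ^ p - M * m ^ p) / (M - m) := by
  rw [nu, ← neg_div]; ring_nf

lemma neg_nu_pos (hm : 0 < m) (hM : m < M) (hp : 1 < p) : 0 < -(nu m M p) := by
  rw [neg_nu]
  exact div_pos (numer_pos hm hM hp) (by linarith)

lemma Kconst_eq (hm : 0 < m) (hM : m < M) (hp : 1 < p) :
    Kconst m M p
      = ((p - 1) * mu m M p / (p * -(nu m M p))) ^ p * (-(nu m M p)) / (p - 1) := by
  have hMm : (M - m) ≠ 0 := by intro h; linarith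
  have hp1 : (p : ℝ) - 1 ≠ 0 := by intro h; linarith
  have h1 : (p - 1) * mu m M p / (p * -(nu m M p))
      = (p - 1) * (M ^ p - m ^ p) / (p * (m * M ^ p - M * m ^ p)) := by
    rw [mu, neg_nu]; field_simp
  rw [Kconst, ← h1]
  generalize ((p - 1) * mu m M p / (p * -(nu m M p))) ^ p = X
  rw [neg_nu]
  field_simp

/-- abstract global bound. -/
lemma line_le (hp : 1 < p) {μ ν K : ℝ} (hμ : 0 < μ) (hν : 0 < -ν)
    (hK : K = ((p - 1) * μ / (p * -ν)) ^ p * (-ν) / (p - 1)) {t : ℝ} (ht : 0 < t) :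
    μ * t + ν ≤ K * t ^ p := by
  have hp0 : 0 < p := by linarith
  have hp1 : 0 < p - 1 := by linarith
  obtain ⟨c, hc⟩ : ∃ c, (p - 1) * μ / (p * -ν) = c := ⟨_, rfl⟩
  obtain ⟨D, hD⟩ : ∃ D, p * -ν / (p - 1) = D := ⟨_, rfl⟩
  have hcpos : 0 < c := by rw [← hc]; positivity
  have hDpos : 0 < D := by rw [← hD]; positivity
  rw [hc] at hK
  have hKpos : 0 < K := by rw [hK]; positivity
  obtain ⟨C, hC⟩ : ∃ C, c ^ p = C := ⟨_, rfl⟩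
  have hCpos : 0 < C := by rw [← hC]; positivity
  have hp1' : p - 1 ≠ 0 := ne_of_gt hp1
  have hν0 : -ν ≠ 0 := ne_of_gt hν
  have hpK : p * K = C * D := by
    rw [hK, hC, ← hD]; field_simp
  have hgm := Real.geom_mean_le_arith_mean2_weighted
    (w₁ := 1/p) (w₂ := 1 - 1/p) (p₁ := p * K * t ^ p) (p₂ := D)
    (by positivity) (by rw [sub_nonneg, div_le_one hp0]; linarith)
    (by positivity) hDpos.le (by field_simp; ring)
  have hL : (p * K * t ^ p) ^ (1/p) * D ^ (1 - 1/p) = μ * t := by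
    have h1 : (p * K * t ^ p) ^ (1/p) = c * D ^ (1/p) * t := by
      rw [hpK, ← hC, Real.mul_rpow (by positivity) (by positivity),
        Real.mul_rpow (by positivity) (by positivity), one_div,
        Real.rpow_rpow_inv hcpos.le (ne_of_gt hp0),
        Real.rpow_rpow_inv ht.le (ne_of_gt hp0)]
    rw [h1]
    have h2 : c * D ^ (1/p) * t * D ^ (1 - 1/p) = c * D * t := by
      have he : D ^ (1/p) * D ^ (1 - 1/p) = D := by
        rw [← Real.rpow_add hDpos]
        norm_num
      calc c * D ^ (1/p) * t * D ^ (1 - 1/p)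
          = c * (D ^ (1/p) * D ^ (1 - 1/p)) * t := by ring
        _ = c * D * t := by rw [he]
    rw [h2, ← hc, ← hD]
    have hν0' : ν ≠ 0 := fun h => by rw [h, neg_zero] at hν0; exact hν0 rfl
    field_simp
  have h3 : 1/p * (p * K * t ^ p) = K * t ^ p := by field_simp
  have h4 : (1 - 1/p) * D = -ν := by rw [← hD]; field_simp
  rw [hL, h3, h4] at hgm
  linarith

lemma Kconst_pos (hm : 0 < m) (hM : m < M) (hp : 1 < p) : 0 < Kconst m M p := by
  rw [Kconst_eq hm hM hp]
  have h1 := mu_pos hm hM hp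
  have h2 := neg_nu_pos hm hM hp
  have : (0:ℝ) < p - 1 := by linarith
  positivity

/-- the global scalar Kantorovich bound. -/
lemma chord_le_K (hm : 0 < m) (hM : m < M) (hp : 1 < p) {t : ℝ} (ht : 0 < t) :
    mu m M p * t + nu m M p ≤ Kconst m M p * t ^ p :=
  line_le hp (mu_pos hm hM hp) (neg_nu_pos hm hM hp) (Kconst_eq hm hM hp) ht

/-- the chord inequality (convexity). -/
lemma rpow_le_chord (hm : 0 < m) (hM : m < M) (hp : 1 < p) {t : ℝ}
    (ht : t ∈ Set.Icc m M) : t ^ p ≤ mu m M p * t + nu m M p := by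
  obtain ⟨ht1, ht2⟩ := ht
  have hMm : 0 < M - m := by linarith
  obtain ⟨a, ha⟩ : ∃ a, (M - t)/(M - m) = a := ⟨_, rfl⟩
  obtain ⟨b, hb⟩ : ∃ b, (t - m)/(M - m) = b := ⟨_, rfl⟩
  have ha0 : 0 ≤ a := by rw [← ha]; apply div_nonneg <;> linarith
  have hb0 : 0 ≤ b := by rw [← hb]; apply div_nonneg <;> linarith
  have hab : a + b = 1 := by rw [← ha, ← hb]; field_simp; ring
  have hcx := (convexOn_rpow (le_of_lt hp)).2 (Set.mem_Ici.mpr hm.le)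
    (Set.mem_Ici.mpr (by linarith : (0:ℝ) ≤ M)) ha0 hb0 hab
  simp only [smul_eq_mul] at hcx
  have hamb : a * m + b * M = t := by
    rw [← ha, ← hb]; field_simp; ring
  rw [hamb] at hcx
  refine hcx.trans (le_of_eq ?_)
  rw [mu, nu, ← ha, ← hb]
  field_simp
  ring



open Matrix

variable {d : ℕ}

lemma contOn {f : ℝ → ℝ} {A : Mat d} : ContinuousOn f (spectrum ℝ A) :=
  (Matrix.finite_real_spectrum (A := A)).continuousOn f

/-- spectrum lower bound from `m•1 ⪯ A`. -/
lemma spec_lower {A : Mat d} {m : ℝ} (h : (A - m • (1 : Mat d)).PosSemidef)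
    {x : ℝ} (hx : x ∈ spectrum ℝ A) : m ≤ x := by
  have hmem : x - m ∈ spectrum ℝ (A - m • (1 : Mat d)) := by
    have : A - m • (1 : Mat d) = A - algebraMap ℝ (Mat d) m := by
      rw [Algebra.algebraMap_eq_smul_one]
    rw [this, ← spectrum.sub_singleton_eq]
    exact Set.sub_mem_sub hx rfl
  rw [h.1.spectrum_real_eq_range_eigenvalues] at hmem
  obtain ⟨i, hi⟩ := hmem
  have := h.eigenvalues_nonneg i
  rw [hi] at this
  linarith

/-- spectrum upper bound from `A ⪯ M•1`. -/
lemma spec_upper {A : Mat d} {M : ℝ} (h : (M • (1 : Mat d) - A).PosSemidef)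
    {x : ℝ} (hx : x ∈ spectrum ℝ A) : x ≤ M := by
  have hmem : M - x ∈ spectrum ℝ (M • (1 : Mat d) - A) := by
    have : M • (1 : Mat d) - A = algebraMap ℝ (Mat d) M - A := by
      rw [Algebra.algebraMap_eq_smul_one]
    rw [this, ← spectrum.singleton_sub_eq]
    exact Set.sub_mem_sub rfl hx
  rw [h.1.spectrum_real_eq_range_eigenvalues] at hmem
  obtain ⟨i, hi⟩ := hmem
  have := h.eigenvalues_nonneg i
  rw [hi] at this
  linarith

lemma spec_pos {A : Mat d} (hA : A.PosDef) {x : ℝ} (hx : x ∈ spectrum ℝ A) :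
    0 < x := by
  rw [hA.isHermitian.spectrum_real_eq_range_eigenvalues] at hx
  obtain ⟨i, hi⟩ := hx
  rw [← hi]
  exact hA.eigenvalues_pos i

/-- `cfc` of a function nonnegative on the spectrum is PSD. -/
lemma cfc_posSemidef {A : Mat d} (hA : A.IsHermitian) {f : ℝ → ℝ}
    (h : ∀ x ∈ spectrum ℝ A, 0 ≤ f x) : (cfc f A).PosSemidef := by
  rw [hA.cfc_eq, Matrix.IsHermitian.cfc]
  have hdiag : (Matrix.diagonal (RCLike.ofReal ∘ f ∘ hA.eigenvalues) : Mat d).PosSemidef := by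
    refine Matrix.PosSemidef.diagonal fun i => ?_
    have := h _ (hA.eigenvalues_mem_spectrum_real i)
    simpa using this
  simpa [Matrix.star_eq_conjTranspose] using
    hdiag.mul_mul_conjTranspose_same (hA.eigenvectorUnitary : Mat d)

/-- PD version of conjugation. -/
lemma posDef_conj {A C : Mat d} (hA : A.PosDef) (hC : IsUnit C.det) :
    (C * A * Cᴴ).PosDef := by
  exact hA.mul_mul_conjTranspose_same
    (Matrix.vecMul_injective_of_isUnit ((Matrix.isUnit_iff_isUnit_det C).mpr hC))

/-- `cfc` of a function positive on the spectrum of a Hermitian matrix is PD. -/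
lemma cfc_posDef {A : Mat d} (hA : A.IsHermitian) {f : ℝ → ℝ}
    (h : ∀ x ∈ spectrum ℝ A, 0 < f x) : (cfc f A).PosDef := by
  rw [hA.cfc_eq, Matrix.IsHermitian.cfc]
  have hdiag : (Matrix.diagonal (RCLike.ofReal ∘ f ∘ hA.eigenvalues) : Mat d).PosDef := by
    refine Matrix.PosDef.diagonal fun i => ?_
    have := h _ (hA.eigenvalues_mem_spectrum_real i)
    simpa using this
  have hU : IsUnit ((hA.eigenvectorUnitary : Mat d)).det := by
    rw [← Matrix.isUnit_iff_isUnit_det]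
    exact ⟨Unitary.toUnits hA.eigenvectorUnitary, rfl⟩
  simpa [Matrix.star_eq_conjTranspose] using posDef_conj hdiag hU

lemma real_smul_eq (c : ℝ) (A : Mat d) : c • A = (c : ℂ) • A := by
  ext i j
  simp [Matrix.smul_apply, Complex.real_smul]

lemma posSemidef_csmul {A : Mat d} (hA : A.PosSemidef) {c : ℂ} (hc : 0 ≤ c) :
    (c • A).PosSemidef := by
  exact hA.smul hc

lemma posSemidef_rsmul {A : Mat d} (hA : A.PosSemidef) {c : ℝ} (hc : 0 ≤ c) :
    (c • A).PosSemidef := by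
  rw [real_smul_eq]
  exact posSemidef_csmul hA (by exact_mod_cast hc)

lemma posDef_csmul {A : Mat d} (hA : A.PosDef) {c : ℂ} (hc : 0 < c) :
    (c • A).PosDef := by
  exact hA.smul hc

lemma posDef_rsmul {A : Mat d} (hA : A.PosDef) {c : ℝ} (hc : 0 < c) :
    (c • A).PosDef := by
  rw [real_smul_eq]
  exact posDef_csmul hA (by exact_mod_cast hc)

lemma posDef_smul_one {c : ℝ} (hc : 0 < c) : (c • (1 : Mat d)).PosDef :=
  posDef_rsmul Matrix.PosDef.one hc

/-- `cfc` of `x ↦ x⁻¹` is the matrix inverse, for PD matrices. -/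
lemma cfc_inv {A : Mat d} (hA : A.PosDef) : cfc (fun x : ℝ => x⁻¹) A = A⁻¹ := by
  have hH := hA.isHermitian
  have key : cfc (fun x : ℝ => x⁻¹) A * A = 1 := by
    have e1 : cfc (fun x : ℝ => x⁻¹) A * cfc (fun x : ℝ => x) A
        = cfc (fun x : ℝ => x⁻¹ * x) A :=
      (cfc_mul (fun x : ℝ => x⁻¹) (fun x : ℝ => x) A contOn contOn).symm
    have e2 : cfc (fun x : ℝ => x⁻¹ * x) A = cfc (fun _ : ℝ => (1:ℝ)) A :=
      cfc_congr fun x hx => inv_mul_cancel₀ (spec_pos hA hx).ne'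
    have e3 : cfc (fun _ : ℝ => (1:ℝ)) A = 1 := cfc_const_one ℝ A
    calc cfc (fun x : ℝ => x⁻¹) A * A
        = cfc (fun x : ℝ => x⁻¹) A * cfc (fun x : ℝ => x) A := by
          rw [cfc_id' ℝ A]
      _ = 1 := by rw [e1, e2, e3]
  exact (Matrix.inv_eq_left_inv key).symm

/-- `(X⁻¹)^p * X^p = 1` for PD `X`. -/
lemma cfc_rpow_inv_mul {A : Mat d} (hA : A.PosDef) (p : ℝ) :
    cfc (fun x : ℝ => x ^ p) (A⁻¹) * cfc (fun x : ℝ => x ^ p) A = 1 := by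
  have hH := hA.isHermitian
  have hc : cfc (fun x : ℝ => x ^ p) (A⁻¹)
      = cfc (fun x : ℝ => (x⁻¹) ^ p) A := by
    have hcomp := cfc_comp' (fun x : ℝ => x ^ p) (fun x : ℝ => x⁻¹) A
      (((Matrix.finite_real_spectrum (A := A)).image _).continuousOn _) contOn hH
    rw [← cfc_inv hA]
    exact hcomp.symm
  rw [hc, ← cfc_mul _ _ A contOn contOn]
  have : cfc (fun x : ℝ => (x⁻¹) ^ p * x ^ p) A = cfc (fun _ : ℝ => (1:ℝ)) A := by
    refine cfc_congr fun x hx => ?_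
    have hx0 : 0 < x := spec_pos hA hx
    rw [Real.inv_rpow hx0.le, inv_mul_cancel₀ (Real.rpow_pos_of_pos hx0 p).ne']
  rw [this, cfc_const_one ℝ A]

/-- cfc of an affine function. -/
lemma cfc_line {A : Mat d} (hA : A.IsHermitian) (μ ν : ℝ) :
    cfc (fun x : ℝ => μ * x + ν) A = μ • A + ν • (1 : Mat d) := by
  have e1 : cfc (fun x : ℝ => μ * x + ν) A
      = cfc (fun x : ℝ => μ * x) A + cfc (fun _ : ℝ => ν) A :=
    cfc_add A (fun x => μ * x) (fun _ => ν) contOn contOn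
  have e2 : cfc (fun x : ℝ => μ * x) A = μ • A := cfc_const_mul_id μ A hA
  have e3 : cfc (fun _ : ℝ => ν) A = ν • (1 : Mat d) := by
    have h := cfc_const ν A (ha := hA)
    rw [Algebra.algebraMap_eq_smul_one] at h
    exact h
  rw [e1, e2, e3]

/-- operator antitonicity of matrix inversion. -/
lemma inv_antitone {X Y : Mat d} (hX : X.PosDef) (hY : Y.PosDef)
    (h : (Y - X).PosSemidef) : (X⁻¹ - Y⁻¹).PosSemidef := by
  have hXdet : IsUnit X.det := (Matrix.isUnit_iff_isUnit_det _).mp hX.isUnit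
  have hYdet : IsUnit Y.det := (Matrix.isUnit_iff_isUnit_det _).mp hY.isUnit
  open scoped MatrixOrder in set R := CFC.sqrt Y with hR
  open scoped MatrixOrder in
  have hR0 : R.PosSemidef := Matrix.nonneg_iff_posSemidef.mp (CFC.sqrt_nonneg Y)
  open scoped MatrixOrder in
  have hRR : R * R = Y :=
    CFC.sqrt_mul_sqrt_self Y (Matrix.nonneg_iff_posSemidef.mpr hY.posSemidef)
  have hRH : R.IsHermitian := hR0.1
  have hRdet : IsUnit R.det := by
    have hdd : R.det * R.det = Y.det := by rw [← Matrix.det_mul, hRR]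
    exact isUnit_of_mul_isUnit_left (hdd ▸ hYdet)
  have hRidet : IsUnit (R⁻¹).det := Matrix.isUnit_nonsing_inv_det _ hRdet
  have hRiH : (R⁻¹).IsHermitian := by
    show (R⁻¹)ᴴ = R⁻¹
    rw [Matrix.conjTranspose_nonsing_inv, hRH.eq]
  have hRiR : R⁻¹ * R = 1 := Matrix.nonsing_inv_mul _ hRdet
  have hRRi : R * R⁻¹ = 1 := Matrix.mul_nonsing_inv _ hRdet
  have hYiRR : Y⁻¹ = R⁻¹ * R⁻¹ := by
    apply Matrix.inv_eq_right_inv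
    rw [← hRR, Matrix.mul_assoc, Matrix.mul_nonsing_inv_cancel_left _ _ hRdet, hRRi]
  have hZpd : (R⁻¹ * X * R⁻¹).PosDef := by
    have := posDef_conj hX hRidet
    rwa [hRiH.eq] at this
  have h1Z : ((1:ℝ) • (1 : Mat d) - R⁻¹ * X * R⁻¹).PosSemidef := by
    have hc := h.mul_mul_conjTranspose_same (R⁻¹)
    rw [hRiH.eq] at hc
    have e : R⁻¹ * (Y - X) * R⁻¹ = (1:ℝ) • (1 : Mat d) - R⁻¹ * X * R⁻¹ := by
      have eY : R⁻¹ * Y * R⁻¹ = 1 := by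
        rw [← hRR, ← Matrix.mul_assoc, hRiR, Matrix.one_mul, hRRi]
      rw [Matrix.mul_sub, Matrix.sub_mul, eY, one_smul]
    rwa [e] at hc
  have hZi : (R⁻¹ * X * R⁻¹)⁻¹ = R * X⁻¹ * R := by
    apply Matrix.inv_eq_right_inv
    calc R⁻¹ * X * R⁻¹ * (R * X⁻¹ * R)
        = R⁻¹ * (X * ((R⁻¹ * R) * (X⁻¹ * R))) := by
          simp only [Matrix.mul_assoc]
      _ = R⁻¹ * (X * (X⁻¹ * R)) := by rw [hRiR, Matrix.one_mul]
      _ = R⁻¹ * ((X * X⁻¹) * R) := by simp only [Matrix.mul_assoc]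
      _ = 1 := by rw [Matrix.mul_nonsing_inv _ hXdet, Matrix.one_mul, hRiR]
  have hZ1 : ((R⁻¹ * X * R⁻¹)⁻¹ - 1).PosSemidef := by
    have hZsa : _root_.IsSelfAdjoint (R⁻¹ * X * R⁻¹) := hZpd.isHermitian
    have hcfc : cfc (fun x : ℝ => x⁻¹ - 1) (R⁻¹ * X * R⁻¹)
        = (R⁻¹ * X * R⁻¹)⁻¹ - 1 := by
      rw [cfc_sub (fun x : ℝ => x⁻¹) (fun _ : ℝ => (1:ℝ)) _ contOn contOn,
        cfc_inv hZpd, cfc_const_one ℝ _]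
    rw [← hcfc]
    refine cfc_posSemidef hZpd.isHermitian fun x hx => ?_
    have hx0 : 0 < x := spec_pos hZpd hx
    have hx1 : x ≤ 1 := spec_upper h1Z hx
    have hxi : 0 < x⁻¹ := inv_pos.mpr hx0
    have hmc : x * x⁻¹ = 1 := mul_inv_cancel₀ hx0.ne'
    nlinarith
  have eX : R⁻¹ * (R * X⁻¹ * R) * R⁻¹ = X⁻¹ := by
    calc R⁻¹ * (R * X⁻¹ * R) * R⁻¹
        = (R⁻¹ * R) * (X⁻¹ * (R * R⁻¹)) := by simp only [Matrix.mul_assoc]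
      _ = X⁻¹ := by rw [hRiR, hRRi, Matrix.one_mul, Matrix.mul_one]
  have key : X⁻¹ - Y⁻¹ = R⁻¹ * ((R⁻¹ * X * R⁻¹)⁻¹ - 1) * R⁻¹ := by
    rw [Matrix.mul_sub, Matrix.sub_mul, hZi, Matrix.mul_one, eX, ← hYiRR]
  rw [key]
  have := hZ1.mul_mul_conjTranspose_same (R⁻¹)
  rwa [hRiH.eq] at this


section KinvSec

variable {m M p : ℝ}

lemma Kconst_inv (hm : 0 < m) (hM : m < M) (hp : 1 < p) :
    Kconst (1/M) (1/m) p = Kconst m M p := by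
  have hM0 : 0 < M := hm.trans hM
  have him : (0:ℝ) < 1/M := by positivity
  have hiM : (1/M : ℝ) < 1/m := by rw [div_lt_div_iff₀ hM0 hm]; linarith
  have ha : (0:ℝ) < m ^ p := Real.rpow_pos_of_pos hm p
  have hb : (0:ℝ) < M ^ p := Real.rpow_pos_of_pos hM0 p
  have e1 : (1/m : ℝ) ^ p = (m ^ p)⁻¹ := by rw [one_div, Real.inv_rpow hm.le]
  have e2 : (1/M : ℝ) ^ p = (M ^ p)⁻¹ := by rw [one_div, Real.inv_rpow hM0.le]
  have hMm : (M:ℝ) - m ≠ 0 := by intro h; linarith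
  have hnn := neg_nu_pos hm hM hp
  have hnn' : -(nu m M p) ≠ 0 := hnn.ne'
  have hmp := mu_pos hm hM hp
  have hp0 : (0:ℝ) < p := by linarith
  have hp1 : (0:ℝ) < p - 1 := by linarith
  have hp1' : (p:ℝ) - 1 ≠ 0 := hp1.ne'
  rw [Kconst_eq him hiM hp, Kconst_eq hm hM hp]
  have hmu' : mu (1/M) (1/m) p = mu m M p * (m * M) / (m ^ p * M ^ p) := by
    rw [mu, mu, e1, e2]
    field_simp
  have hnu' : -(nu (1/M) (1/m) p) = -(nu m M p) / (m ^ p * M ^ p) := by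
    rw [neg_nu, neg_nu, e1, e2]
    field_simp
  have hC : (0:ℝ) < (p - 1) * mu m M p / (p * -(nu m M p)) := by positivity
  have hbase : (p - 1) * mu (1/M) (1/m) p / (p * -(nu (1/M) (1/m) p))
      = ((p - 1) * mu m M p / (p * -(nu m M p))) * (m * M) := by
    rw [hmu', hnu']
    field_simp
  rw [hbase, hnu', Real.mul_rpow hC.le (by positivity), Real.mul_rpow hm.le hM0.le]
  generalize ((p - 1) * mu m M p / (p * -(nu m M p))) ^ p = Cp
  field_simp

end KinvSec

/-- Core chord-based Kantorovich bound: if `0 < m•1 ⪯ X ⪯ M•1` and `X ⪯ Y` then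
`X^p ⪯ K(m,M,p) • Y^p`. -/
lemma core {d : ℕ} {X Y : Mat d} {m M p : ℝ} (hX : X.PosDef) (hY : Y.PosDef)
    (hm : 0 < m) (hM : m < M) (hp : 1 < p)
    (hl : (X - m • (1 : Mat d)).PosSemidef) (hu : (M • (1 : Mat d) - X).PosSemidef)
    (hXY : (Y - X).PosSemidef) :
    (Kconst m M p • cfc (fun x : ℝ => x ^ p) Y - cfc (fun x : ℝ => x ^ p) X).PosSemidef := by
  have hXH := hX.isHermitian
  have hYH := hY.isHermitian
  have stepA : (mu m M p • X + nu m M p • (1:Mat d)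
      - cfc (fun x : ℝ => x ^ p) X).PosSemidef := by
    have e : cfc (fun x : ℝ => (mu m M p * x + nu m M p) - x ^ p) X
        = mu m M p • X + nu m M p • (1:Mat d) - cfc (fun x : ℝ => x ^ p) X := by
      rw [cfc_sub (fun x : ℝ => mu m M p * x + nu m M p) (fun x : ℝ => x ^ p) X
        contOn contOn, cfc_line hXH]
    rw [← e]
    refine cfc_posSemidef hXH fun x hx => ?_
    have h1 : x ∈ Set.Icc m M := ⟨spec_lower hl hx, spec_upper hu hx⟩
    have := rpow_le_chord hm hM hp h1
    linarith
  have stepB : ((mu m M p • Y + nu m M p • (1:Mat d))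
      - (mu m M p • X + nu m M p • (1:Mat d))).PosSemidef := by
    have e : (mu m M p • Y + nu m M p • (1:Mat d))
        - (mu m M p • X + nu m M p • (1:Mat d)) = mu m M p • (Y - X) := by
      rw [smul_sub]; abel
    rw [e]; exact posSemidef_rsmul hXY (mu_pos hm hM hp).le
  have stepC : (Kconst m M p • cfc (fun x : ℝ => x ^ p) Y
      - (mu m M p • Y + nu m M p • (1:Mat d))).PosSemidef := by
    have e0 : cfc (fun x : ℝ => Kconst m M p * x ^ p) Y
        = Kconst m M p • cfc (fun x : ℝ => x ^ p) Y :=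
      cfc_const_mul (Kconst m M p) (fun x : ℝ => x ^ p) Y contOn
    have e : cfc (fun x : ℝ => Kconst m M p * x ^ p - (mu m M p * x + nu m M p)) Y
        = Kconst m M p • cfc (fun x : ℝ => x ^ p) Y
          - (mu m M p • Y + nu m M p • (1:Mat d)) := by
      rw [cfc_sub (fun x : ℝ => Kconst m M p * x ^ p)
        (fun x : ℝ => mu m M p * x + nu m M p) Y contOn contOn, e0, cfc_line hYH]
    rw [← e]
    refine cfc_posSemidef hYH fun x hx => ?_
    have := chord_le_K hm hM hp (spec_pos hY hx)
    linarith
  have c1 := stepC.add stepB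
  rw [sub_add_sub_cancel] at c1
  have c2 := c1.add stepA
  rwa [sub_add_sub_cancel] at c2

end KantAux

/-- **Kantorovich-type inequality** (Lemma 4.1): if `m₁·I ⪯ A ⪯ M₁·I`,
`m₂·I ⪯ B ⪯ M₂·I`, `B ⪯ A` and `p > 1`, then `B^p ⪯ K(m₁,M₁,p)·A^p` and
`B^p ⪯ K(m₂,M₂,p)·A^p`. -/
theorem kantorovich_type_inequality {d : ℕ} (hd : 1 ≤ d)
    (A B : Mat d) (hA : A.PosDef) (hB : B.PosDef)
    (m1 M1 m2 M2 : ℝ) (hm1 : 0 < m1) (hM1 : m1 < M1) (hm2 : 0 < m2) (hM2 : m2 < M2)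
    (hA1 : (A - m1 • (1 : Mat d)).PosSemidef) (hA2 : (M1 • (1 : Mat d) - A).PosSemidef)
    (hB1 : (B - m2 • (1 : Mat d)).PosSemidef) (hB2 : (M2 • (1 : Mat d) - B).PosSemidef)
    (hBA : (A - B).PosSemidef) (p : ℝ) (hp : 1 < p) :
    (Kconst m1 M1 p • mpow A p - mpow B p).PosSemidef ∧
      (Kconst m2 M2 p • mpow A p - mpow B p).PosSemidef := by
  have hM10 : 0 < M1 := hm1.trans hM1
  have claim2 : (Kconst m2 M2 p • mpow A p - mpow B p).PosSemidef :=
    KantAux.core hB hA hm2 hM2 hp hB1 hB2 hBA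
  have hAi : (A⁻¹).PosDef := hA.inv
  have hBi : (B⁻¹).PosDef := hB.inv
  have hsm : ((m1 : ℝ) • (1 : Mat d)).PosDef := KantAux.posDef_smul_one hm1
  have hsM : ((M1 : ℝ) • (1 : Mat d)).PosDef := KantAux.posDef_smul_one hM10
  have esM : ((M1 : ℝ) • (1 : Mat d))⁻¹ = (1/M1) • (1 : Mat d) := by
    apply Matrix.inv_eq_right_inv
    rw [smul_mul_smul_comm, mul_one_div_cancel hM10.ne', Matrix.one_mul, one_smul]
  have esm : ((m1 : ℝ) • (1 : Mat d))⁻¹ = (1/m1) • (1 : Mat d) := by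
    apply Matrix.inv_eq_right_inv
    rw [smul_mul_smul_comm, mul_one_div_cancel hm1.ne', Matrix.one_mul, one_smul]
  have hIa : (A⁻¹ - (1/M1) • (1 : Mat d)).PosSemidef := by
    have := KantAux.inv_antitone hA hsM hA2
    rwa [esM] at this
  have hIb : ((1/m1) • (1 : Mat d) - A⁻¹).PosSemidef := by
    have := KantAux.inv_antitone hsm hA hA1
    rwa [esm] at this
  have hVi : (B⁻¹ - A⁻¹).PosSemidef := KantAux.inv_antitone hB hA hBA
  have h1M : (0:ℝ) < 1/M1 := by positivity
  have h1m : (1/M1 : ℝ) < 1/m1 := by rw [div_lt_div_iff₀ hM10 hm1]; linarith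
  have hcore := KantAux.core hAi hBi h1M h1m hp hIa hIb hVi
  rw [KantAux.Kconst_inv hm1 hM1 hp] at hcore
  have hKpos := KantAux.Kconst_pos hm1 hM1 hp
  have P1 : (cfc (fun x : ℝ => x ^ p) (A⁻¹)).PosDef :=
    KantAux.cfc_posDef hAi.isHermitian fun x hx =>
      Real.rpow_pos_of_pos (KantAux.spec_pos hAi hx) p
  have P2 : (Kconst m1 M1 p • cfc (fun x : ℝ => x ^ p) (B⁻¹)).PosDef :=
    KantAux.posDef_rsmul (KantAux.cfc_posDef hBi.isHermitian fun x hx =>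
      Real.rpow_pos_of_pos (KantAux.spec_pos hBi hx) p) hKpos
  have hstep := KantAux.inv_antitone P1 P2 hcore
  have eA : (cfc (fun x : ℝ => x ^ p) (A⁻¹))⁻¹ = cfc (fun x : ℝ => x ^ p) A :=
    Matrix.inv_eq_right_inv (KantAux.cfc_rpow_inv_mul hA p)
  have eB : (Kconst m1 M1 p • cfc (fun x : ℝ => x ^ p) (B⁻¹))⁻¹
      = (1/(Kconst m1 M1 p)) • cfc (fun x : ℝ => x ^ p) B := by
    apply Matrix.inv_eq_right_inv
    rw [smul_mul_smul_comm, KantAux.cfc_rpow_inv_mul hB p,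
      mul_one_div_cancel hKpos.ne', one_smul]
  rw [eA, eB] at hstep
  have final := KantAux.posSemidef_rsmul hstep hKpos.le
  rw [smul_sub, smul_smul, mul_one_div_cancel hKpos.ne', one_smul] at final
  exact ⟨final, claim2⟩
end
end
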